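/- arXiv:1906.05179 — 7 statements merged into one kernel-verified Lean document; each statement's English description precedes it below -/
import Mathlib

section
/- Let p be prime, q a prime power with p ∣ q−1, and ω ∈ 𝔽_q of order p. If f : ℤ/p → 𝔽_q is nonzero with |supp f| = m, then the complement of supp f̂ contains no arithmetic progression of length m in ℤ/p, where f̂(t) = p⁻¹ ∑_{z} ω^{tz} f(z). -/
/-!
Let `S = supp f`, so `|S| = m`, and suppose `f̂` vanishes at `a, a + b, …, a + (m-1)b`.
As `t ↦ ω ^ (t * z).val` is a character, these `m` equations say that the vector
`v z = ω ^ (a z) f z` on `S` has vanishing power sums `∑ v z x_z ^ j`, `j < m`, at the nodes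
`x_z = ω ^ (b z)`. The nodes are distinct (`ω` has order `p`, and `b ≠ 0` once `m ≥ 2`),
so the Vandermonde matrix is invertible and `v = 0`, contradicting `f ≠ 0`.
-/

open Finset

/-- The finite-field Fourier transform f̂(t) = p⁻¹ ∑_z ω^{tz} f(z). -/
def dft {p : ℕ} [NeZero p] {F : Type} [Field F] (ω : F) (f : ZMod p → F) :
    ZMod p → F :=
  fun t => (p : F)⁻¹ * ∑ z : ZMod p, ω ^ (t * z).val * f z

theorem Finset.eq_zero_of_forall_sum_mul_pow_eq_zero {R ι : Type*} [CommRing R] [IsDomain R]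
    {s : Finset ι} {x v : ι → R} (hx : Set.InjOn x s)
    (h : ∀ j < #s, ∑ i ∈ s, v i * x i ^ j = 0) : ∀ i ∈ s, v i = 0 := by
  let e : Fin #s ≃ s := s.equivFin.symm
  have hxe : Function.Injective fun k => x (e k) := fun k l hkl =>
    e.injective (Subtype.ext (hx (e k).2 (e l).2 hkl))
  have hve : (fun k => v (e k)) = 0 := by
    refine Matrix.eq_zero_of_forall_pow_sum_mul_pow_eq_zero hxe fun j => ?_
    rw [e.sum_comp (fun i : s => v i * x i ^ (j : ℕ)),
      sum_coe_sort s (fun i => v i * x i ^ (j : ℕ))]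
    exact h j j.2
  intro i hi
  simpa using congrFun hve (e.symm ⟨i, hi⟩)

section PowVal

variable {G : Type*} [Monoid G] {g : G} {p : ℕ}

theorem pow_val_eq_pow_of_natCast_eq (hg : orderOf g = p) {u : ZMod p} {n : ℕ}
    (h : (n : ZMod p) = u) : g ^ u.val = g ^ n := by
  rw [← h, ZMod.val_natCast, ← hg, pow_mod_orderOf]

theorem pow_val_injective [NeZero p] (hg : orderOf g = p) :
    Function.Injective fun u : ZMod p => g ^ u.val := fun u v huv =>
  ZMod.val_injective p <|
    pow_injOn_Iio_orderOf (by simpa [hg] using u.val_lt) (by simpa [hg] using v.val_lt) huv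

end PowVal

open Classical in
theorem dft_apply_add_mul {p : ℕ} [NeZero p] {F : Type} [Field F] {ω : F}
    (hω : orderOf ω = p) (f : ZMod p → F) (a b : ZMod p) (j : ℕ) :
    dft ω f (a + j * b) = (p : F)⁻¹ *
      ∑ z ∈ (Function.support f).toFinset, ω ^ (a * z).val * f z * (ω ^ (b * z).val) ^ j := by
  have hterm (z : ZMod p) :
      ω ^ ((a + j * b) * z).val * f z = ω ^ (a * z).val * f z * (ω ^ (b * z).val) ^ j := by
    rw [pow_val_eq_pow_of_natCast_eq hω (n := (a * z).val + j * (b * z).val)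
      (by push_cast [ZMod.natCast_val, ZMod.cast_id]; ring), pow_add, pow_mul']
    ring
  have hsupp : ∑ z ∈ (Function.support f).toFinset, ω ^ ((a + j * b) * z).val * f z =
      ∑ z, ω ^ ((a + j * b) * z).val * f z :=
    sum_subset (subset_univ _) fun z _ hz => by simp_all
  rw [dft, ← hsupp]
  simp_rw [hterm]

theorem stmt2_general (p : ℕ) [Fact p.Prime]
    {F : Type} [Field F]
    (ω : F) (hω : orderOf ω = p)
    (f : ZMod p → F) (hf : f ≠ 0) (m : ℕ) (hm : (Function.support f).ncard = m) :
    ¬ ∃ a b : ZMod p,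
        ((Finset.range m).image fun j : ℕ => a + (j : ZMod p) * b).card = m ∧
        ∀ t ∈ (Finset.range m).image fun j : ℕ => a + (j : ZMod p) * b,
          dft ω f t = 0 := by
  classical
  rintro ⟨a, b, hcard, hzero⟩
  set S := (Function.support f).toFinset
  have hS : #S = m := by rw [← hm, Set.ncard_eq_toFinset_card']
  have hζ : IsPrimitiveRoot ω p := hω ▸ IsPrimitiveRoot.orderOf ω
  have hp : (p : F) ≠ 0 := hζ.neZero'.out
  have hsum (j : ℕ) (hj : j < #S) :
      ∑ z ∈ S, ω ^ (a * z).val * f z * (ω ^ (b * z).val) ^ j = 0 := by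
    have := hzero _ (mem_image_of_mem _ (mem_range.mpr (hS ▸ hj)))
    rwa [dft_apply_add_mul hω, mul_eq_zero, or_iff_right (inv_ne_zero hp)] at this
  have hinj : Set.InjOn (fun z => ω ^ (b * z).val) S := by
    by_cases hb : b = 0
    · have hm : m ≤ 1 := hcard ▸ card_le_one.mpr fun _ h₁ _ h₂ => by simp_all
      exact Set.Subsingleton.injOn (fun x hx y hy => card_le_one.mp (hS ▸ hm) x hx y hy) _
    · exact ((pow_val_injective hω).comp (mul_right_injective₀ hb)).injOn
  obtain ⟨z, hz⟩ := Function.ne_iff.mp hf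
  have hvz := eq_zero_of_forall_sum_mul_pow_eq_zero hinj hsum z (by simpa [S] using hz)
  exact hz (by simpa [hζ.ne_zero (NeZero.ne p)] using hvz)

/-- Let p be prime, q a prime power with p ∣ q−1, and ω ∈ 𝔽_q of order p.
If f : ℤ/p → 𝔽_q is nonzero with |supp f| = m, then the complement of supp f̂ contains
no arithmetic progression of length m in ℤ/p. -/
theorem stmt2 (p q : ℕ) [Fact p.Prime] (hq : IsPrimePow q) (hpq : p ∣ q - 1)
    {F : Type} [Field F] [Fintype F] (hF : Fintype.card F = q)
    (ω : F) (hω : orderOf ω = p)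
    (f : ZMod p → F) (hf : f ≠ 0) (m : ℕ) (hm : (Function.support f).ncard = m) :
    ¬ ∃ a b : ZMod p,
        ((Finset.range m).image fun j : ℕ => a + (j : ZMod p) * b).card = m ∧
        ∀ t ∈ (Finset.range m).image fun j : ℕ => a + (j : ZMod p) * b,
          dft ω f t = 0 :=
  stmt2_general p ω hω f hf m hm
end

section
/- Let p be prime, q a prime power with p ∣ q−1, and ω ∈ 𝔽_q of order p. Any nonzero f : ℤ/p → 𝔽_q with |supp f| = m satisfies |supp f̂| ≥ p − r_m(p), where r_m(p) is the maximum size of a subset of ℤ/p containing no arithmetic progression of length m. -/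
/-- A finset of ℤ/p contains an arithmetic progression of length m. -/
def HasAP {p : ℕ} (m : ℕ) (A : Finset (ZMod p)) : Prop :=
  ∃ a b : ZMod p,
    ((Finset.range m).image fun j : ℕ => a + (j : ZMod p) * b).card = m ∧
    ((Finset.range m).image fun j : ℕ => a + (j : ZMod p) * b) ⊆ A

/-- r_m(p): the maximum size of a subset of ℤ/p containing no arithmetic progression
of length m. -/
noncomputable def rAP (p m : ℕ) : ℕ :=
  sSup {n | ∃ A : Finset (ZMod p), ¬ HasAP m A ∧ A.card = n}

/-- Let p be prime, q a prime power with p ∣ q−1, and ω ∈ 𝔽_q of order p.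
Any nonzero f : ℤ/p → 𝔽_q with |supp f| = m satisfies |supp f̂| ≥ p − r_m(p). -/
theorem stmt3 (p q : ℕ) [Fact p.Prime] (hq : IsPrimePow q) (hpq : p ∣ q - 1)
    {F : Type} [Field F] [Fintype F] (hF : Fintype.card F = q)
    (ω : F) (hω : orderOf ω = p)
    (f : ZMod p → F) (hf : f ≠ 0) (m : ℕ) (hm : (Function.support f).ncard = m) :
    (Function.support (dft ω f)).ncard ≥ p - rAP p m := by
  classical
  have hp : p.Prime := Fact.out
  have hp0 : p ≠ 0 := hp.ne_zero
  haveI : NeZero p := ⟨hp0⟩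
  -- ω is nonzero
  have hωp : ω ^ p = 1 := by rw [← hω]; exact pow_orderOf_eq_one ω
  have hω0 : ω ≠ 0 := by
    rintro rfl
    rw [zero_pow hp0] at hωp
    exact zero_ne_one hωp
  -- (p : F) ≠ 0
  have hpF : (p : F) ≠ 0 := by
    intro h
    have hdvd : ringChar F ∣ p := ringChar.dvd h
    obtain ⟨n, hpr, hcard⟩ := FiniteField.card F (ringChar F)
    have h1 : ringChar F = p := (Nat.prime_dvd_prime_iff_eq hpr hp).mp hdvd
    have hq1 : p ∣ q := by
      rw [← hF, hcard, h1]; exact dvd_pow_self _ n.pos.ne'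
    have hq2 : 1 ≤ q := hq.one_lt.le.trans' (by norm_num)
    have hdvd1 : p ∣ 1 := by
      have := Nat.dvd_sub hq1 hpq
      rwa [Nat.sub_sub_self hq2] at this
    have hle1 : p ≤ 1 := Nat.le_of_dvd one_pos hdvd1
    have hgt1 : 1 < p := hp.one_lt
    omega
  -- power congruences
  have hmod : ∀ n : ℕ, ω ^ (n % p) = ω ^ n := by
    intro n
    conv_rhs => rw [← Nat.div_add_mod n p]
    rw [pow_add, pow_mul, hωp, one_pow, one_mul]
  have hadd : ∀ u v : ZMod p, ω ^ (u + v).val = ω ^ u.val * ω ^ v.val := by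
    intro u v
    rw [ZMod.val_add, hmod, pow_add]
  have hnat : ∀ (n : ℕ) (x : ZMod p), ω ^ (((n : ZMod p)) * x).val = (ω ^ x.val) ^ n := by
    intro n x
    induction n with
    | zero => simp
    | succ k ih =>
      have hx : (((k + 1 : ℕ) : ZMod p)) * x = ((k : ZMod p)) * x + x := by
        push_cast; ring
      rw [hx, hadd, ih, pow_succ]
  -- injectivity of z ↦ ω^z.val
  have hinj : ∀ u v : ZMod p, ω ^ u.val = ω ^ v.val → u = v := by
    intro u v h
    have hu : IsUnit ω := IsUnit.mk0 ω hω0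
    have hU : ((hu.unit : Fˣ) : F) = ω := hu.unit_spec
    have hord : orderOf (hu.unit : Fˣ) = p := by
      rw [← orderOf_units, hU]; exact hω
    have hpow : (hu.unit : Fˣ) ^ u.val = (hu.unit : Fˣ) ^ v.val := by
      apply Units.ext
      simpa [hU] using h
    rw [pow_eq_pow_iff_modEq, hord] at hpow
    have h3 : u.val % p = v.val % p := hpow
    rw [Nat.mod_eq_of_lt u.val_lt, Nat.mod_eq_of_lt v.val_lt] at h3
    exact ZMod.val_injective p h3
  -- support finset
  set S : Finset (ZMod p) := (Set.toFinite (Function.support f)).toFinset with hS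
  have hScard : S.card = m := by
    rw [hS, ← Set.ncard_eq_toFinset_card, hm]
  have hmem : ∀ z, z ∈ S ↔ f z ≠ 0 := by
    intro z; simp [hS, Function.mem_support]
  have hm0 : m ≠ 0 := by
    intro h
    rw [h, Finset.card_eq_zero] at hScard
    apply hf; funext z
    by_contra hz
    exact Finset.notMem_empty z (hScard ▸ (hmem z).mpr hz)
  -- enumerate the support
  have e2 : Fin m ≃ {x // x ∈ S} := (finCongr hScard.symm).trans S.equivFin.symm
  set ι : Fin m → ZMod p := fun i => ((e2 i : {x // x ∈ S}) : ZMod p) with hι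
  have hιinj : Function.Injective ι := by
    intro i j h
    exact e2.injective (Subtype.ext h)
  have hιmem : ∀ i, ι i ∈ S := fun i => (e2 i).2
  have hsum : ∀ g : ZMod p → F, (∑ z ∈ S, g z) = ∑ i : Fin m, g (ι i) := by
    intro g
    have h1 := Equiv.sum_comp e2 (fun x : {x // x ∈ S} => g ↑x)
    rw [Finset.sum_coe_sort] at h1
    exact h1.symm
  -- the zero set of the transform
  set Z : Finset (ZMod p) := Finset.univ.filter (fun t => dft ω f t = 0) with hZ
  have hZfree : ¬ HasAP m Z := by
    rintro ⟨a, b, hcard, hsub⟩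
    -- the linear equations
    have heq : ∀ j : ℕ, j < m →
        ∑ z : ZMod p, ω ^ ((a + (j : ZMod p) * b) * z).val * f z = 0 := by
      intro j hj
      have hmemZ : a + (j : ZMod p) * b ∈ Z :=
        hsub (Finset.mem_image.mpr ⟨j, Finset.mem_range.mpr hj, rfl⟩)
      have h0 : dft ω f (a + (j : ZMod p) * b) = 0 := (Finset.mem_filter.mp hmemZ).2
      simp only [dft] at h0
      rcases mul_eq_zero.mp h0 with h | h
      · exact absurd h (inv_ne_zero hpF)
      · exact h
    -- b ≠ 0 if m ≥ 2
    have hbm : 2 ≤ m → b ≠ 0 := by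
      intro h2 hb0
      have hle : ((Finset.range m).image fun j : ℕ => a + (j : ZMod p) * b).card ≤ 1 := by
        apply Finset.card_le_one.mpr
        intro x hx y hy
        simp only [Finset.mem_image, hb0, mul_zero, add_zero] at hx hy
        obtain ⟨_, _, rfl⟩ := hx
        obtain ⟨_, _, rfl⟩ := hy
        rfl
      omega
    -- the coefficient vector and Vandermonde nodes
    set v : Fin m → F := fun i => ω ^ (b * ι i).val with hv
    set c : Fin m → F := fun i => ω ^ (a * ι i).val * f (ι i) with hc
    have hvinj : Function.Injective v := by
      intro i j hij
      by_contra hne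
      have hvalne : (i : ℕ) ≠ (j : ℕ) := fun h => hne (Fin.ext h)
      have hi := i.isLt
      have hj := j.isLt
      have h2 : 2 ≤ m := by omega
      have hb := hbm h2
      have h4 : b * ι i = b * ι j := hinj _ _ hij
      exact hne (hιinj (mul_left_cancel₀ hb h4))
    have heq2 : ∀ k : Fin m, ∑ i : Fin m, c i * v i ^ (k : ℕ) = 0 := by
      intro k
      have h0 := heq (k : ℕ) k.isLt
      rw [← Finset.sum_subset (Finset.subset_univ S)
        (by intro x _ hx
            have hfx : f x = 0 := by
              by_contra h
              exact hx ((hmem x).mpr h)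
            rw [hfx, mul_zero])] at h0
      rw [hsum] at h0
      rw [← h0]
      apply Finset.sum_congr rfl
      intro i _
      have hexpand : (a + ((k : ℕ) : ZMod p) * b) * ι i
          = a * ι i + (((k : ℕ) : ZMod p)) * (b * ι i) := by ring
      rw [hexpand, hadd, hnat, hv, hc]
      ring
    have hczero : c = 0 :=
      Matrix.eq_zero_of_forall_pow_sum_mul_pow_eq_zero hvinj heq2
    have hc0 := congrFun hczero ⟨0, Nat.pos_of_ne_zero hm0⟩
    simp only [Pi.zero_apply, hc] at hc0
    rcases mul_eq_zero.mp hc0 with h | h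
    · exact pow_ne_zero _ hω0 h
    · exact (hmem _).mp (hιmem _) h
  -- conclude via counting
  have hZle : Z.card ≤ rAP p m := by
    apply le_csSup
    · refine ⟨p, ?_⟩
      rintro n ⟨A, -, rfl⟩
      calc A.card ≤ Fintype.card (ZMod p) := Finset.card_le_univ A
        _ = p := ZMod.card p
    · exact ⟨Z, hZfree, rfl⟩
  have hsupp : (Function.support (dft ω f)).ncard
      = (Finset.univ.filter (fun t => ¬ dft ω f t = 0)).card := by
    rw [Set.ncard_eq_toFinset_card']
    congr 1
    ext t
    simp [Function.mem_support]
  have hsplit : (Finset.univ.filter (fun t => dft ω f t = 0)).card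
      + (Finset.univ.filter (fun t => ¬ dft ω f t = 0)).card
      = (Finset.univ : Finset (ZMod p)).card :=
    Finset.card_filter_add_card_filter_not _
  have huniv : (Finset.univ : Finset (ZMod p)).card = p := by
    simp [ZMod.card]
  rw [hsupp]
  rw [hZ] at hZle
  omega
end

section
/- Let G be a finite abelian group and f : G → ℂ a nonzero function. Then |supp f| · |supp f̂| ≥ |G|, where f̂(χ) = ∑_{g ∈ G} χ(g)⁻¹ f(g) is the Fourier transform over the dual group. -/
/-- Fourier transform over the dual group: f̂(χ) = ∑_g χ(g)⁻¹ f(g). -/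
noncomputable def groupDft {G : Type} [CommGroup G] [Fintype G] (f : G → ℂ) : (G →* ℂˣ) → ℂ :=
  fun χ => ∑ g : G, ((χ g)⁻¹ : ℂˣ) * f g

section Aux

variable {G : Type} [CommGroup G] [Fintype G] [DecidableEq G]

/-- Multiplicative characters `G →* ℂˣ` are the same as additive characters of `Additive G`. -/
noncomputable def charEquiv : (G →* ℂˣ) ≃ AddChar (Additive G) ℂ where
  toFun χ :=
    { toFun := fun a => ((χ a.toMul : ℂˣ) : ℂ)
      map_zero_eq_one' := by simp
      map_add_eq_mul' := by intro a b; simp [toMul_add] }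
  invFun ψ :=
    (ψ.toMonoidHom.comp (MulEquiv.multiplicativeAdditive G).symm.toMonoidHom).toHomUnits
  left_inv χ := by ext g; rfl
  right_inv ψ := by ext a; rfl

lemma charFinite : Finite (G →* ℂˣ) := Finite.of_equiv _ (charEquiv (G := G)).symm

lemma charEquiv_symm_apply (ψ : AddChar (Additive G) ℂ) (x : G) :
    (((charEquiv.symm ψ) x : ℂˣ) : ℂ) = ψ (Additive.ofMul x) := rfl

/-- Orthogonality: summing a character-evaluation over all characters. -/
lemma sum_char_eq [Fintype (G →* ℂˣ)] (x : G) :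
    ∑ χ : (G →* ℂˣ), ((χ x : ℂˣ) : ℂ) = if x = 1 then (Fintype.card G : ℂ) else 0 := by
  rw [← Equiv.sum_comp (charEquiv (G := G)).symm (fun χ : G →* ℂˣ => ((χ x : ℂˣ) : ℂ))]
  simp only [charEquiv_symm_apply]
  by_cases hx : x = 1
  · subst hx
    simp only [if_pos rfl]
    have h1 : ∀ ψ : AddChar (Additive G) ℂ, ψ (Additive.ofMul (1 : G)) = 1 := fun ψ =>
      ψ.map_zero_eq_one
    simp only [h1, Finset.sum_const, Finset.card_univ, nsmul_eq_mul, mul_one]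
    rw [AddChar.card_eq]
    simp only [if_true]
    congr 1
    exact Fintype.card_congr Additive.toMul
  · rw [if_neg hx]
    exact AddChar.sum_apply_eq_zero_iff_ne_zero.2 (by simpa using hx)

lemma norm_char (χ : G →* ℂˣ) (g : G) : ‖((χ g : ℂˣ) : ℂ)‖ = 1 := by
  have h : ((χ g : ℂˣ) : ℂ) ^ Fintype.card G = 1 := by
    rw [← Units.val_pow_eq_pow_val, ← map_pow, pow_card_eq_one, map_one, Units.val_one]
  exact Complex.norm_eq_one_of_pow_eq_one h Fintype.card_ne_zero

/-- Fourier inversion (unnormalized). -/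
lemma inv_formula [Fintype (G →* ℂˣ)] (f : G → ℂ) (g : G) :
    (Fintype.card G : ℂ) * f g = ∑ χ : (G →* ℂˣ), ((χ g : ℂˣ) : ℂ) * groupDft f χ := by
  unfold groupDft
  have key : ∀ χ : G →* ℂˣ, ((χ g : ℂˣ) : ℂ) * ∑ h : G, ((χ h)⁻¹ : ℂˣ) * f h
      = ∑ h : G, ((χ (g * h⁻¹) : ℂˣ) : ℂ) * f h := by
    intro χ
    rw [Finset.mul_sum]
    refine Finset.sum_congr rfl fun h _ => ?_
    rw [← mul_assoc]
    congr 1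
    rw [map_mul, map_inv, Units.val_mul]
  simp only [key]
  rw [Finset.sum_comm]
  have : ∀ h : G, ∑ χ : (G →* ℂˣ), ((χ (g * h⁻¹) : ℂˣ) : ℂ) * f h
      = (if g * h⁻¹ = 1 then (Fintype.card G : ℂ) else 0) * f h := by
    intro h
    rw [← Finset.sum_mul, sum_char_eq]
  simp only [this, mul_inv_eq_one, ite_mul, zero_mul]
  rw [Finset.sum_ite_eq Finset.univ g (fun h => (Fintype.card G : ℂ) * f h)]
  simp

end Aux

/-- Let G be a finite abelian group and f : G → ℂ nonzero. Then
|supp f| · |supp f̂| ≥ |G|. -/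
theorem stmt4 {G : Type} [CommGroup G] [Fintype G] (f : G → ℂ) (hf : f ≠ 0) :
    (Function.support f).ncard * (Function.support (groupDft f)).ncard ≥
      Fintype.card G := by
  classical
  haveI : Finite (G →* ℂˣ) := charFinite
  haveI : Fintype (G →* ℂˣ) := Fintype.ofFinite _
  -- pick a maximizer of ‖f ·‖
  obtain ⟨g₀, -, hg₀⟩ := Finset.exists_max_image Finset.univ (fun g => ‖f g‖)
    ⟨Classical.arbitrary G, Finset.mem_univ _⟩
  set M : ℝ := ‖f g₀‖ with hM
  have hMpos : 0 < M := by
    obtain ⟨g, hg⟩ := Function.ne_iff.1 hf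
    have : 0 < ‖f g‖ := by simpa [norm_pos_iff] using hg
    exact lt_of_lt_of_le this (hg₀ g (Finset.mem_univ g))
  set A : Finset G := (Function.support f).toFinset with hA
  set B : Finset (G →* ℂˣ) := (Function.support (groupDft f)).toFinset with hB
  have hAmem : ∀ g : G, g ∉ A → f g = 0 := by
    intro g hg; simpa [hA, Set.mem_toFinset, Function.mem_support, not_not] using hg
  have hBmem : ∀ χ : G →* ℂˣ, χ ∉ B → groupDft f χ = 0 := by
    intro χ hχ; simpa [hB, Set.mem_toFinset, Function.mem_support, not_not] using hχ
  -- bound on each Fourier coefficient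
  have hFbound : ∀ χ : G →* ℂˣ, ‖groupDft f χ‖ ≤ A.card * M := by
    intro χ
    calc ‖groupDft f χ‖ ≤ ∑ g : G, ‖((χ g)⁻¹ : ℂˣ) * f g‖ := norm_sum_le _ _
      _ = ∑ g : G, ‖f g‖ := by
          refine Finset.sum_congr rfl fun g _ => ?_
          rw [norm_mul]
          have : ‖(((χ g)⁻¹ : ℂˣ) : ℂ)‖ = 1 := by
            have := norm_char χ g⁻¹
            rwa [map_inv] at this
          rw [this, one_mul]
      _ = ∑ g ∈ A, ‖f g‖ := by
          refine (Finset.sum_subset A.subset_univ ?_).symm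
          intro g _ hg
          simp [hAmem g hg]
      _ ≤ A.card * M := by
          have := Finset.sum_le_card_nsmul A (fun g => ‖f g‖) M
            (fun g _ => hg₀ g (Finset.mem_univ g))
          simpa [nsmul_eq_mul] using this
  -- main chain of inequalities
  have hmain : (Fintype.card G : ℝ) * M ≤ (A.card * B.card : ℝ) * M := by
    calc (Fintype.card G : ℝ) * M = ‖(Fintype.card G : ℂ) * f g₀‖ := by
          rw [norm_mul, Complex.norm_natCast]
      _ = ‖∑ χ : (G →* ℂˣ), ((χ g₀ : ℂˣ) : ℂ) * groupDft f χ‖ := by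
          rw [inv_formula]
      _ ≤ ∑ χ : (G →* ℂˣ), ‖((χ g₀ : ℂˣ) : ℂ) * groupDft f χ‖ := norm_sum_le _ _
      _ = ∑ χ : (G →* ℂˣ), ‖groupDft f χ‖ := by
          refine Finset.sum_congr rfl fun χ _ => ?_
          rw [norm_mul, norm_char, one_mul]
      _ = ∑ χ ∈ B, ‖groupDft f χ‖ := by
          refine (Finset.sum_subset B.subset_univ ?_).symm
          intro χ _ hχ
          simp [hBmem χ hχ]
      _ ≤ B.card * (A.card * M) := by
          have := Finset.sum_le_card_nsmul B (fun χ => ‖groupDft f χ‖) (A.card * M)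
            (fun χ _ => hFbound χ)
          simpa [nsmul_eq_mul] using this
      _ = (A.card * B.card : ℝ) * M := by ring
  have hcard : (Fintype.card G : ℝ) ≤ (A.card * B.card : ℝ) :=
    le_of_mul_le_mul_right hmain hMpos
  have : Fintype.card G ≤ A.card * B.card := by exact_mod_cast hcard
  rwa [ge_iff_le, Set.ncard_eq_toFinset_card', Set.ncard_eq_toFinset_card']
end

section
/- Let p be prime, q a prime power with p ∣ q−1, and ω ∈ 𝔽_q of order p. For any nonzero f : ℤ/p → 𝔽_q, |supp f| · |supp f̂| ≥ p, where f̂(t) = p⁻¹ ∑_z ω^{tz} f(z). -/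
set_option maxHeartbeats 1000000


lemma pow_val_add {p : ℕ} [NeZero p] {F : Type} [Field F] {ω : F} (hω : orderOf ω = p)
    (a b : ZMod p) : ω ^ (a + b).val = ω ^ a.val * ω ^ b.val := by
  rw [ZMod.val_add, ← pow_add]
  have h := pow_mod_orderOf ω (a.val + b.val)
  rwa [hω] at h

lemma pow_val_mul {p : ℕ} [NeZero p] {F : Type} [Field F] {ω : F} (hω : orderOf ω = p)
    (a b : ZMod p) : ω ^ (a * b).val = (ω ^ a.val) ^ b.val := by
  rw [ZMod.val_mul, ← pow_mul]
  have h := pow_mod_orderOf ω (a.val * b.val)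
  rwa [hω] at h

/-- Let p be prime, q a prime power with p ∣ q−1, and ω ∈ 𝔽_q of order p.
For any nonzero f : ℤ/p → 𝔽_q, |supp f| · |supp f̂| ≥ p. -/
theorem stmt5 (p q : ℕ) [Fact p.Prime] (hq : IsPrimePow q) (hpq : p ∣ q - 1)
    {F : Type} [Field F] [Fintype F] (hF : Fintype.card F = q)
    (ω : F) (hω : orderOf ω = p)
    (f : ZMod p → F) (hf : f ≠ 0) :
    (Function.support f).ncard * (Function.support (dft ω f)).ncard ≥ p := by
  classical
  have hp : p.Prime := Fact.out
  -- (p : F) ≠ 0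
  have hp0 : (p : F) ≠ 0 := by
    intro h
    have hd : ringChar F ∣ p := ringChar.dvd h
    have hne1 : ringChar F ≠ 1 := CharP.ringChar_ne_one
    have hcp : ringChar F = p := by
      rcases (Nat.Prime.eq_one_or_self_of_dvd hp _ hd) with h1 | h1
      · exact absurd h1 hne1
      · exact h1
    haveI : CharP F p := hcp ▸ ringChar.charP F
    obtain ⟨n, hpn, hqn⟩ := FiniteField.card F p
    have hpq' : p ∣ q := hF ▸ hqn ▸ dvd_pow_self p n.ne_zero
    have hq2 : 2 ≤ q := hq.two_le
    have h1 : p ∣ 1 := by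
      have := Nat.dvd_sub hpq' hpq
      simpa [Nat.sub_sub_self (by omega : 1 ≤ q)] using this
    exact hp.one_lt.ne' (Nat.dvd_one.mp h1)
  have hω0 : ω ≠ 0 := by
    intro h
    have h1 : ω ^ p = 1 := by rw [← hω]; exact pow_orderOf_eq_one ω
    rw [h, zero_pow hp.ne_zero] at h1
    exact zero_ne_one h1
  -- support of f as a finset
  set S : Finset (ZMod p) := Finset.univ.filter (fun z => f z ≠ 0) with hS
  have hmemS : ∀ z, z ∈ S ↔ f z ≠ 0 := by
    intro z; simp [hS]
  have hScoe : (Function.support f) = ↑S := by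
    ext z; simp [hS, Function.mem_support]
  set k := S.card with hk
  have hk0 : 0 < k := by
    rcases Function.ne_iff.mp hf with ⟨z, hz⟩
    exact Finset.card_pos.mpr ⟨z, (hmemS z).mpr (by simpa using hz)⟩
  have hkp : k ≤ p := by
    have := Finset.card_le_univ S
    simpa [ZMod.card] using this
  -- the equivalence Fin k ≃ S
  let e : Fin k ≃ {x // x ∈ S} := S.equivFin.symm
  -- nodes of the Vandermonde matrix
  let x : Fin k → F := fun i => ω ^ ((e i : ZMod p)).val
  have hxinj : Function.Injective x := by
    intro i j hij
    have hvi : ((e i : ZMod p)).val ∈ Set.Iio (orderOf ω) := by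
      rw [hω]; exact ZMod.val_lt _
    have hvj : ((e j : ZMod p)).val ∈ Set.Iio (orderOf ω) := by
      rw [hω]; exact ZMod.val_lt _
    have hv : ((e i : ZMod p)).val = ((e j : ZMod p)).val :=
      pow_injOn_Iio_orderOf hvi hvj hij
    have : (e i : ZMod p) = (e j : ZMod p) := ZMod.val_injective _ hv
    exact e.injective (Subtype.ext this)
  -- KEY: every window of length k contains a point of supp f̂
  have key : ∀ t : ZMod p, ∃ j : Fin k, dft ω f (t + (j : ℕ)) ≠ 0 := by
    intro t
    by_contra hcon
    push_neg at hcon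
    -- define the vector w
    set w : Fin k → F := fun i => ω ^ ((t * (e i : ZMod p)).val) * f (e i : ZMod p) with hw
    have hrow : ∀ j : Fin k, (∑ i : Fin k, w i * x i ^ (j : ℕ)) = 0 := by
      intro j
      have hdft := hcon j
      unfold dft at hdft
      have hsum : (∑ z : ZMod p, ω ^ ((t + (j : ℕ)) * z).val * f z) = 0 := by
        rcases mul_eq_zero.mp hdft with h | h
        · exact absurd h (inv_ne_zero hp0)
        · exact h
      have hsum2 : (∑ z ∈ S, ω ^ ((t + (j : ℕ)) * z).val * f z) = 0 := by
        rw [← hsum]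
        apply Finset.sum_subset (Finset.subset_univ S)
        intro z _ hz
        have : f z = 0 := by
          by_contra hfz
          exact hz ((hmemS z).mpr hfz)
        simp [this]
      -- rewrite through the equivalence
      have heq : ∀ z : ZMod p, ω ^ ((t + (j : ℕ)) * z).val * f z
          = (ω ^ ((t * z).val) * f z) * (ω ^ z.val) ^ (j : ℕ) := by
        intro z
        have h1 : (t + (j : ℕ)) * z = t * z + z * (j : ℕ) := by ring
        have hjval : ((j : ℕ) : ZMod p).val = (j : ℕ) :=
          ZMod.val_natCast_of_lt (lt_of_lt_of_le j.isLt hkp)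
        rw [h1, pow_val_add hω, pow_val_mul hω z (((j : ℕ) : ZMod p)), hjval]
        ring
      have hsum3 : (∑ i : Fin k, w i * x i ^ (j : ℕ)) =
          ∑ z ∈ S, ω ^ ((t + (j : ℕ)) * z).val * f z :=
        calc ∑ i : Fin k, w i * x i ^ (j : ℕ)
            = ∑ i : Fin k,
              (fun z : {v // v ∈ S} => ω ^ ((t + (j : ℕ)) * (z : ZMod p)).val * f z) (e i) := by
              apply Finset.sum_congr rfl
              intro i _
              simp only [hw, x]
              rw [heq]
          _ = ∑ z : {v // v ∈ S}, ω ^ ((t + (j : ℕ)) * (z : ZMod p)).val * f z :=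
              e.sum_comp (fun z : {v // v ∈ S} => ω ^ ((t + (j : ℕ)) * (z : ZMod p)).val * f z)
          _ = ∑ z ∈ S, ω ^ ((t + (j : ℕ)) * z).val * f z :=
              Finset.sum_coe_sort S (fun z => ω ^ ((t + (j : ℕ)) * z).val * f z)
      rw [hsum3, hsum2]
    have hw0 : w = 0 := Matrix.eq_zero_of_forall_pow_sum_mul_pow_eq_zero hxinj hrow
    -- contradiction: w i ≠ 0 for any i
    have i0 : Fin k := ⟨0, hk0⟩
    have hzero : ω ^ ((t * (e i0 : ZMod p)).val) * f (e i0 : ZMod p) = 0 := by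
      have := congrFun hw0 i0
      simpa [hw] using this
    have hfi : f (e i0 : ZMod p) ≠ 0 := (hmemS _).mp (e i0).2
    exact mul_ne_zero (pow_ne_zero _ hω0) hfi hzero
  -- support of f̂ as a finset
  set T : Finset (ZMod p) := Finset.univ.filter (fun z => dft ω f z ≠ 0) with hT
  have hmemT : ∀ z, z ∈ T ↔ dft ω f z ≠ 0 := by
    intro z; simp [hT]
  have hTcoe : (Function.support (dft ω f)) = ↑T := by
    ext z; simp [hT, Function.mem_support]
  -- counting injection
  let Φ : ZMod p → {s // s ∈ T} × Fin k := fun t =>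
    (⟨t + ((key t).choose : ℕ), (hmemT _).mpr (key t).choose_spec⟩, (key t).choose)
  have hΦinj : Function.Injective Φ := by
    intro t1 t2 h
    have h2 : (key t1).choose = (key t2).choose := congrArg Prod.snd h
    have h1 : t1 + (((key t1).choose : Fin k) : ℕ) = t2 + (((key t2).choose : Fin k) : ℕ) :=
      congrArg (fun a => (a.1 : ZMod p)) h
    rw [h2] at h1
    exact add_right_cancel h1
  have hcount : p ≤ T.card * k := by
    have := Fintype.card_le_of_injective Φ hΦinj
    simpa [ZMod.card, Fintype.card_coe] using this
  have hSn : (Function.support f).ncard = k := by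
    rw [hScoe, Set.ncard_coe_finset]
  have hTn : (Function.support (dft ω f)).ncard = T.card := by
    rw [hTcoe, Set.ncard_coe_finset]
  rw [ge_iff_le, hSn, hTn, mul_comm]
  exact hcount
end

section
/- Let p be prime, q a prime power with p ∣ q−1, and ω ∈ 𝔽_q of order p. If f : ℤ/p → 𝔽_q has |supp f| = 2, then |supp f̂| ≥ (p+1)/2. -/
/-- If f : ℤ/p → 𝔽_q has |supp f| = 2, then |supp f̂| ≥ p − 1. -/
theorem stmt16 (p q : ℕ) [Fact p.Prime] (hq : IsPrimePow q) (hpq : p ∣ q - 1)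
    {F : Type} [Field F] [Fintype F] (hF : Fintype.card F = q)
    (ω : F) (hω : orderOf ω = p)
    (f : ZMod p → F) (hm : (Function.support f).ncard = 2) :
    (Function.support (dft ω f)).ncard ≥ p - 1 := by
  have hp := (Fact.out : p.Prime)
  have hω1 : ω ^ p = 1 := by rw [← hω]; exact pow_orderOf_eq_one ω
  -- (p : F) ≠ 0
  have hpF : (p : F) ≠ 0 := by
    intro h
    haveI := ringChar.charP F
    have hchar : ringChar F ∣ p := (CharP.cast_eq_zero_iff F (ringChar F) p).mp h
    rcases (Nat.Prime.eq_one_or_self_of_dvd hp _ hchar) with h1 | h1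
    · exact CharP.ringChar_ne_one h1
    · haveI : CharP F p := h1 ▸ ringChar.charP F
      have : ω = 1 := by
        have := frobenius_inj F p
        have : frobenius F p ω = frobenius F p 1 := by
          simp [frobenius_def, hω1]
        exact frobenius_inj F p this
      rw [this, orderOf_one] at hω
      exact hp.one_lt.ne' hω.symm
  obtain ⟨a, b, hab, hsupp⟩ := Set.ncard_eq_two.mp hm
  have hfa : f a ≠ 0 := by
    have : a ∈ Function.support f := by rw [hsupp]; simp
    exact this
  have hfb : f b ≠ 0 := by
    have : b ∈ Function.support f := by rw [hsupp]; simp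
    exact this
  have hker : ∀ z, z ≠ a → z ≠ b → f z = 0 := by
    intro z h1 h2
    by_contra h
    have : z ∈ ({a, b} : Set (ZMod p)) := hsupp ▸ h
    simp at this
    tauto
  have hdft : ∀ t, dft ω f t
      = (p : F)⁻¹ * (ω ^ (t * a).val * f a + ω ^ (t * b).val * f b) := by
    intro t
    unfold dft
    congr 1
    rw [show (∑ z : ZMod p, ω ^ (t * z).val * f z)
        = ∑ z ∈ ({a, b} : Finset (ZMod p)), ω ^ (t * z).val * f z from
      (Finset.sum_subset (Finset.subset_univ _) (by
        intro z _ hz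
        simp only [Finset.mem_insert, Finset.mem_singleton, not_or] at hz
        rw [hker z hz.1 hz.2, mul_zero])).symm]
    rw [Finset.sum_pair hab]
  have hg : ∀ x y : ZMod p, ω ^ x.val * ω ^ y.val = ω ^ (x + y).val := by
    intro x y
    have h := pow_mod_orderOf ω (x.val + y.val)
    rw [hω] at h
    rw [← pow_add, ZMod.val_add, h]
  have hginj : ∀ x y : ZMod p, ω ^ x.val = ω ^ y.val → x = y := by
    intro x y h
    have := pow_injOn_Iio_orderOf (x := ω)
      (by rw [hω]; exact Set.mem_Iio.mpr (ZMod.val_lt x))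
      (by rw [hω]; exact Set.mem_Iio.mpr (ZMod.val_lt y)) h
    exact ZMod.val_injective p this
  have hzero : ∀ t s : ZMod p, dft ω f t = 0 → dft ω f s = 0 → t = s := by
    intro t s ht hs
    rw [hdft] at ht hs
    have hinv : (p : F)⁻¹ ≠ 0 := inv_ne_zero hpF
    have ht' : ω ^ (t * a).val * f a = -(ω ^ (t * b).val * f b) :=
      eq_neg_of_add_eq_zero_left ((mul_eq_zero.mp ht).resolve_left hinv)
    have hs' : ω ^ (s * a).val * f a = -(ω ^ (s * b).val * f b) :=
      eq_neg_of_add_eq_zero_left ((mul_eq_zero.mp hs).resolve_left hinv)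
    have h2 : (ω ^ (t * a).val * ω ^ (s * b).val) * (f a * f b)
        = (ω ^ (s * a).val * ω ^ (t * b).val) * (f a * f b) := by
      have h1 : (ω ^ (t * a).val * f a) * (ω ^ (s * b).val * f b)
          = (ω ^ (s * a).val * f a) * (ω ^ (t * b).val * f b) := by
        rw [ht', hs']; ring
      linear_combination h1
    have key : ω ^ (t * a + s * b).val = ω ^ (s * a + t * b).val := by
      rw [← hg, ← hg]
      exact mul_right_cancel₀ (mul_ne_zero hfa hfb) h2
    have heq : t * a + s * b = s * a + t * b := hginj _ _ key
    have hzz : (t - s) * (a - b) = 0 := by linear_combination heq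
    rcases mul_eq_zero.mp hzz with h | h
    · exact sub_eq_zero.mp h
    · exact absurd (sub_eq_zero.mp h) hab
  have hsub : (Function.support (dft ω f))ᶜ.Subsingleton := by
    intro t ht s hs
    simp only [Set.mem_compl_iff, Function.mem_support, not_not] at ht hs
    exact hzero t s ht hs
  have h1 : (Function.support (dft ω f))ᶜ.ncard ≤ 1 := by
    rcases hsub.eq_empty_or_singleton with h | ⟨x, h⟩
    · simp [h]
    · simp [h]
  have h2 : (Function.support (dft ω f)).ncard
      + (Function.support (dft ω f))ᶜ.ncard = p := by
    rw [Set.ncard_add_ncard_compl, Nat.card_zmod]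
  omega
end

section
/- Let p be prime and S, Z ⊆ ℤ/p with |S| = |Z| = m > 0. Over ℂ with ω = e^{2πi/p}, if Z is an arithmetic progression, then the m×m matrix (ω^{tz})_{t ∈ Z, z ∈ S} is invertible. -/
open Complex in
/-- Let p be prime and S, Z ⊆ ℤ/p with |S| = |Z| = m > 0. Over ℂ with
ω = e^{2πi/p}, if Z is an arithmetic progression, then the m×m matrix
(ω^{tz})_{t ∈ Z, z ∈ S} is invertible. -/
theorem stmt17 (p : ℕ) [Fact p.Prime] (m : ℕ) (hm : 0 < m)
    (S Z : Finset (ZMod p)) (hS : S.card = m) (hZ : Z.card = m)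
    (a b : ZMod p) (hb : b ≠ 0)
    (hAP : Z = (Finset.range m).image fun j : ℕ => a + (j : ZMod p) * b) :
    ∀ e : ↥Z ≃ ↥S,
      IsUnit ((Matrix.of fun (t : ↥Z) (s : ↥S) =>
        Complex.exp (2 * Real.pi * Complex.I / p) ^
          ((t : ZMod p) * (s : ZMod p)).val).submatrix id e) := by
  intro e
  have hp : p.Prime := Fact.out
  have hp0 : p ≠ 0 := hp.ne_zero
  haveI : NeZero p := ⟨hp0⟩
  set ω : ℂ := Complex.exp (2 * Real.pi * Complex.I / p) with hωdef
  have hω : IsPrimitiveRoot ω p := Complex.isPrimitiveRoot_exp p hp0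
  have hω0 : ω ≠ 0 := Complex.exp_ne_zero _
  have hpow1 : ω ^ p = 1 := hω.pow_eq_one
  have hmod : ∀ n : ℕ, ω ^ (n % p) = ω ^ n := by
    intro n
    conv_rhs => rw [← Nat.div_add_mod n p]
    rw [pow_add, pow_mul, hpow1, one_pow, one_mul]
  have hchi : ∀ x y : ZMod p, ω ^ (x + y).val = ω ^ x.val * ω ^ y.val := by
    intro x y
    rw [← pow_add, ZMod.val_add, hmod]
  have hchiN : ∀ (j : ℕ) (x : ZMod p),
      ω ^ (((j : ZMod p) * x).val) = (ω ^ x.val) ^ j := by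
    intro j x
    induction j with
    | zero => simp
    | succ n ih =>
      push_cast
      rw [add_mul, one_mul, hchi, ih, pow_succ]
  -- χ is injective
  have hchiInj : Function.Injective (fun u : ZMod p => ω ^ u.val) := by
    intro u v huv
    have := hω.pow_inj (ZMod.val_lt u) (ZMod.val_lt v) huv
    exact ZMod.val_injective p this
  have hmp : m ≤ p := by
    have := Finset.card_le_univ Z
    simpa [hZ, ZMod.card] using this
  -- the parametrization of Z
  have htmem : ∀ j : Fin m, a + (j : ZMod p) * b ∈ Z := by
    intro j
    rw [hAP]
    exact Finset.mem_image.2 ⟨j, Finset.mem_range.2 j.2, rfl⟩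
  have htinj : Function.Injective (fun j : Fin m => (⟨a + (j : ZMod p) * b, htmem j⟩ : ↥Z)) := by
    intro j k h
    have h1 : a + (j : ZMod p) * b = a + (k : ZMod p) * b := congrArg Subtype.val h
    have h2 : ((j : ℕ) : ZMod p) = ((k : ℕ) : ZMod p) :=
      mul_right_cancel₀ hb (add_left_cancel h1)
    have h3 : ((j : ℕ) : ZMod p).val = ((k : ℕ) : ZMod p).val := by rw [h2]
    rw [ZMod.val_cast_of_lt (j.2.trans_le hmp), ZMod.val_cast_of_lt (k.2.trans_le hmp)] at h3
    exact Fin.ext h3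
  have hcard : Fintype.card ↥Z = m := by simp [hZ]
  have hbij : Function.Bijective (fun j : Fin m => (⟨a + (j : ZMod p) * b, htmem j⟩ : ↥Z)) := by
    rw [Fintype.bijective_iff_injective_and_card]
    exact ⟨htinj, by simp [hcard]⟩
  let f : Fin m ≃ ↥Z := Equiv.ofBijective _ hbij
  set M : Matrix ↥Z ↥S ℂ := Matrix.of fun (t : ↥Z) (s : ↥S) =>
      ω ^ (((t : ZMod p) * (s : ZMod p)).val) with hMdef
  let g : Fin m → ↥S := fun i => e (f i)
  have hgInj : Function.Injective g := fun i j h => f.injective (e.injective h)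
  let sv : Fin m → ZMod p := fun i => (g i : ZMod p)
  have hsvInj : Function.Injective sv := fun i j h => hgInj (Subtype.ext h)
  let c : Fin m → ℂ := fun i => ω ^ ((a * sv i).val)
  let x : Fin m → ℂ := fun i => ω ^ ((b * sv i).val)
  have hxInj : Function.Injective x := by
    intro i j h
    have : b * sv i = b * sv j := hchiInj h
    exact hsvInj (mul_left_cancel₀ hb this)
  rw [Matrix.isUnit_iff_isUnit_det, isUnit_iff_ne_zero]
  have hsub : (M.submatrix id ⇑e).submatrix f f
      = (Matrix.diagonal c * Matrix.vandermonde x).transpose := by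
    ext j i
    have hfj : ((f j : ZMod p)) = a + (j : ZMod p) * b := rfl
    simp only [Matrix.submatrix_apply, Matrix.transpose_apply, Matrix.mul_apply,
      Matrix.diagonal_apply, Matrix.vandermonde_apply, id_eq, hMdef, Matrix.of_apply]
    rw [Finset.sum_eq_single i (by intro k _ hk; simp [Ne.symm hk]) (by simp), if_pos rfl]
    show ω ^ (((f j : ZMod p)) * sv i).val = c i * x i ^ (j : ℕ)
    rw [hfj, add_mul, mul_assoc, hchi, hchiN]
  have hdet : (M.submatrix id ⇑e).det
      = ((M.submatrix id ⇑e).submatrix f f).det :=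
    (Matrix.det_submatrix_equiv_self f _).symm
  rw [hdet, hsub, Matrix.det_transpose, Matrix.det_mul, Matrix.det_diagonal,
    Matrix.det_vandermonde]
  apply mul_ne_zero
  · exact Finset.prod_ne_zero_iff.2 fun i _ => pow_ne_zero _ hω0
  · refine Finset.prod_ne_zero_iff.2 fun i _ => Finset.prod_ne_zero_iff.2 fun j hj => ?_
    have hij : i ≠ j := fun h => (Finset.mem_Ioi.1 hj).ne' (h ▸ rfl)
    exact sub_ne_zero.2 fun h => hij (hxInj h.symm)
end

section
/- Let p be prime, q a prime power with p ∣ q−1, and ω ∈ 𝔽_q of order p. For any nonzero f : ℤ/p → 𝔽_q with m = |supp f|, the set of zeros of f̂, Z = {t : f̂(t) = 0}, satisfies |Z| ≤ r_m(p); in particular if m ≥ 2 and every subset of ℤ/p of size exceeding r_m(p) contains an m-term AP, then |supp f̂| ≥ p − r_m(p). -/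
lemma chiAdd {p : ℕ} [NeZero p] {F : Type} [Field F] {ω : F} (hω : orderOf ω = p)
    (x y : ZMod p) : ω ^ (x + y).val = ω ^ x.val * ω ^ y.val := by
  rw [← pow_add, ZMod.val_add]
  have h := pow_mod_orderOf (x := ω) (n := x.val + y.val)
  rw [hω] at h
  exact h

lemma chiMulNat {p : ℕ} [NeZero p] {F : Type} [Field F] {ω : F} (hω : orderOf ω = p)
    (k : ℕ) (x : ZMod p) : ω ^ (((k : ZMod p)) * x).val = (ω ^ x.val) ^ k := by
  induction k with
  | zero => simp
  | succ n ih =>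
    have : ((((n : ℕ) + 1 : ℕ) : ZMod p)) * x = ((n : ZMod p)) * x + x := by
      push_cast; ring
    rw [this, chiAdd hω, ih, pow_succ]

lemma noAP {p : ℕ} [Fact p.Prime] {F : Type} [Field F] (hp : (p : F) ≠ 0)
    (ω : F) (hω : orderOf ω = p) (f : ZMod p → F) (hf : f ≠ 0) (m : ℕ)
    (hm : (Function.support f).ncard = m) (A : Finset (ZMod p))
    (hA : ∀ t ∈ A, dft ω f t = 0) : ¬ HasAP m A := by
  classical
  rintro ⟨a, b, hcard, hsub⟩
  have hppos : 0 < p := (Fact.out : p.Prime).pos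
  have hm0 : m ≠ 0 := by
    rintro rfl
    exact hf (Function.support_eq_empty_iff.mp
      ((Set.ncard_eq_zero (Set.toFinite _)).mp hm))
  have hω0 : ω ≠ 0 := by
    intro h
    have h1 := pow_orderOf_eq_one ω
    rw [hω, h, zero_pow hppos.ne'] at h1
    exact zero_ne_one h1
  -- the support as a finset
  set S : Finset (ZMod p) := (Set.toFinite (Function.support f)).toFinset with hS
  have hScard : S.card = m := by
    rw [← hm, Set.ncard_eq_toFinset_card]
  have hSmem : ∀ z, z ∈ S ↔ f z ≠ 0 := by
    intro z; simp [hS, Function.mem_support]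
  -- enumeration of the support
  let E : Fin m ≃ {x // x ∈ S} := (finCongr hScard.symm).trans S.equivFin.symm
  let g : Fin m → ZMod p := fun i => (E i : ZMod p)
  have hginj : Function.Injective g := by
    intro i j hij
    exact (finCongr hScard.symm).injective (S.equivFin.symm.injective (Subtype.ext hij))
  have hgmem : ∀ i, f (g i) ≠ 0 := fun i => (hSmem _).mp (E i).2
  -- reduce sums over ZMod p to sums over Fin m
  have hsum : ∀ G : ZMod p → F, (∀ z, f z = 0 → G z = 0) →
      ∑ z : ZMod p, G z = ∑ i : Fin m, G (g i) := by
    intro G hG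
    rw [show (∑ i : Fin m, G (g i)) = ∑ x : {x // x ∈ S}, G x from
      (Equiv.sum_comp E (fun x => G (x : ZMod p))),
      Finset.sum_coe_sort S G]
    refine (Finset.sum_subset (Finset.subset_univ S) ?_).symm
    intro z _ hz
    exact hG z (by by_contra h; exact hz ((hSmem z).mpr h))
  -- the AP points
  have hinjAP : Set.InjOn (fun j : ℕ => a + (j : ZMod p) * b) (Finset.range m) := by
    rw [← Finset.card_image_iff]
    rw [hcard, Finset.card_range]
  -- the system of equations
  have hzero : ∀ k : Fin m, ∑ z : ZMod p, ω ^ ((a + (k : ℕ) * b) * z).val * f z = 0 := by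
    intro k
    have hmemA : a + ((k : ℕ) : ZMod p) * b ∈ A := by
      apply hsub
      exact Finset.mem_image.mpr ⟨k, Finset.mem_range.mpr k.2, rfl⟩
    have := hA _ hmemA
    unfold dft at this
    rcases mul_eq_zero.mp this with h | h
    · exact absurd h (inv_ne_zero hp)
    · exact h
  -- Vandermonde setup
  let x : Fin m → F := fun i => ω ^ ((b * g i).val)
  let v : Fin m → F := fun i => ω ^ ((a * g i).val) * f (g i)
  have hsys : ∀ k : Fin m, ∑ i : Fin m, x i ^ (k : ℕ) * v i = 0 := by
    intro k
    have h1 := hzero k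
    rw [hsum _ (fun z hz => by rw [hz, mul_zero])] at h1
    rw [← h1]
    apply Finset.sum_congr rfl
    intro i _
    have : (a + ((k : ℕ) : ZMod p) * b) * g i = a * g i + ((k : ℕ) : ZMod p) * (b * g i) := by
      ring
    rw [this, chiAdd hω, chiMulNat hω]
    ring
  have hxinj : Function.Injective x := by
    rcases Nat.lt_or_ge m 2 with h2 | h2
    · intro i j _
      have : (i : ℕ) = (j : ℕ) := by omega
      exact Fin.ext this
    · have hb : b ≠ 0 := by
        intro h0
        have : ((Finset.range m).image fun j : ℕ => a + (j : ZMod p) * b) = {a} := by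
          rw [h0]
          simp only [mul_zero, add_zero]
          exact Finset.image_const (by simp; omega) a
        rw [this] at hcard
        simp at hcard
        omega
      intro i j hij
      have hv1 : (b * g i).val < orderOf ω := by rw [hω]; exact ZMod.val_lt _
      have hv2 : (b * g j).val < orderOf ω := by rw [hω]; exact ZMod.val_lt _
      have := pow_injOn_Iio_orderOf hv1 hv2 hij
      have hbg : b * g i = b * g j := ZMod.val_injective _ this
      exact hginj (mul_left_cancel₀ hb hbg)
  -- the matrix is nonsingular
  have hdet : ((Matrix.vandermonde x).transpose).det ≠ 0 := by
    rw [Matrix.det_transpose]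
    exact Matrix.det_vandermonde_ne_zero_iff.mpr hxinj
  have hmv : (Matrix.vandermonde x).transpose.mulVec v = 0 := by
    funext k
    simpa [Matrix.mulVec, dotProduct, Matrix.vandermonde] using hsys k
  have hv0 : v = 0 := Matrix.eq_zero_of_mulVec_eq_zero hdet hmv
  have : v ⟨0, Nat.pos_of_ne_zero hm0⟩ = 0 := by rw [hv0]; rfl
  exact (mul_ne_zero (pow_ne_zero _ hω0) (hgmem _)) this

/-- For nonzero f : ℤ/p → 𝔽_q with m = |supp f|, the zero set
Z = {t : f̂(t) = 0} satisfies |Z| ≤ r_m(p); in particular if m ≥ 2 and every subset of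
ℤ/p of size exceeding r_m(p) contains an m-term AP, then |supp f̂| ≥ p − r_m(p). -/
theorem stmt19 (p q : ℕ) [Fact p.Prime] (hq : IsPrimePow q) (hpq : p ∣ q - 1)
    {F : Type} [Field F] [Fintype F] (hF : Fintype.card F = q)
    (ω : F) (hω : orderOf ω = p)
    (f : ZMod p → F) (hf : f ≠ 0) (m : ℕ) (hm : (Function.support f).ncard = m) :
    {t : ZMod p | dft ω f t = 0}.ncard ≤ rAP p m ∧
      (2 ≤ m → (∀ W : Finset (ZMod p), rAP p m < W.card → HasAP m W) →
        (Function.support (dft ω f)).ncard ≥ p - rAP p m) := by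
  classical
  have hpprime : p.Prime := Fact.out
  -- (p : F) ≠ 0
  have hp : (p : F) ≠ 0 := by
    intro h
    haveI := ringChar.charP F
    have hr : ringChar F ∣ p := (CharP.cast_eq_zero_iff F (ringChar F) p).mp h
    have hrp : (ringChar F).Prime := CharP.char_is_prime F (ringChar F)
    have heq : ringChar F = p := (Nat.prime_dvd_prime_iff_eq hrp hpprime).mp hr
    obtain ⟨n, -, hcard⟩ := FiniteField.card F (ringChar F)
    have hpq' : p ∣ q := by
      rw [← hF, hcard, heq]
      exact dvd_pow_self p n.2.ne'
    have hq2 : 2 ≤ q := hq.two_le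
    have h1 : p ∣ q - (q - 1) := Nat.dvd_sub hpq' hpq
    rw [Nat.sub_sub_self (by omega)] at h1
    exact hpprime.one_lt.ne' (Nat.eq_one_of_dvd_one h1)
  set Z : Set (ZMod p) := {t : ZMod p | dft ω f t = 0} with hZ
  have hnoAP : ¬ HasAP m (Set.toFinite Z).toFinset :=
    noAP hp ω hω f hf m hm _ (fun t ht => by simpa [hZ] using (Set.Finite.mem_toFinset _).mp ht)
  have hmem : Z.ncard ∈ {n | ∃ A : Finset (ZMod p), ¬ HasAP m A ∧ A.card = n} :=
    ⟨(Set.toFinite Z).toFinset, hnoAP, (Set.ncard_eq_toFinset_card Z (Set.toFinite Z)).symm⟩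
  have hbdd : BddAbove {n | ∃ A : Finset (ZMod p), ¬ HasAP m A ∧ A.card = n} := by
    refine ⟨p, ?_⟩
    rintro n ⟨A, -, rfl⟩
    calc A.card ≤ Fintype.card (ZMod p) := Finset.card_le_univ A
    _ = p := ZMod.card p
  have h1 : Z.ncard ≤ rAP p m := le_csSup hbdd hmem
  refine ⟨h1, fun _ _ => ?_⟩
  have hcompl : Function.support (dft ω f) = Zᶜ := by
    ext t; simp [Function.mem_support, hZ]
  have hsum := Set.ncard_add_ncard_compl Z
  rw [Nat.card_zmod] at hsum
  rw [hcompl]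
  omega
end
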